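/- For every bounded linear operator A on a complex Hilbert space, w⁴(A) ≤ (1/4)[ w²(A²) + (1/4)‖(A*A)² + (AA*)²‖ + (1/2)w(A*A²A*) + w(A²)·‖A*A + AA*‖ ]. -/

import Mathlib

open scoped InnerProductSpace
open ContinuousLinearMap

/-- The numerical radius of a bounded linear operator. -/
noncomputable def numRadius {H : Type*} [NormedAddCommGroup H] [InnerProductSpace ℂ H]
    (A : H →L[ℂ] H) : ℝ :=
  sSup {r : ℝ | ∃ x : H, ‖x‖ = 1 ∧ r = ‖⟪A x, x⟫_ℂ‖}

/-- The Crawford number of a bounded linear operator. -/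
noncomputable def crawford {H : Type*} [NormedAddCommGroup H] [InnerProductSpace ℂ H]
    (A : H →L[ℂ] H) : ℝ :=
  sInf {r : ℝ | ∃ x : H, ‖x‖ = 1 ∧ r = ‖⟪A x, x⟫_ℂ‖}

/-- The real part of a bounded linear operator. -/
noncomputable def reP {H : Type*} [NormedAddCommGroup H] [InnerProductSpace ℂ H]
    [CompleteSpace H] (A : H →L[ℂ] H) : H →L[ℂ] H :=
  ((2 : ℂ)⁻¹) • (A + adjoint A)

/-- The imaginary part of a bounded linear operator. -/
noncomputable def imP {H : Type*} [NormedAddCommGroup H] [InnerProductSpace ℂ H]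
    [CompleteSpace H] (A : H →L[ℂ] H) : H →L[ℂ] H :=
  ((2 * Complex.I)⁻¹) • (A - adjoint A)

/-!
Buzano's inequality `2 |⟪a, e⟫⟪e, b⟫| ≤ ‖a‖ ‖b‖ + |⟪a, b⟫|` for a unit vector `e`, applied to
`a = A x`, `b = A* x`, `e = x`, gives `w(A)² ≤ ½ w(A²) + ¼ ‖A*A + AA*‖`. Squaring, it remains to
bound `‖S‖²` for the self-adjoint `S = A*A + AA*`: here `‖S‖² = ‖S²‖` and
`S² = (A*A)² + (AA*)² + T + T*` with `T = A*A²A*`, while `‖T + T*‖ ≤ 2 w(T)` because the norm of a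
self-adjoint operator is the supremum of its quadratic form.
-/

section NumRadius

variable {H : Type*} [NormedAddCommGroup H] [InnerProductSpace ℂ H]

lemma norm_inner_apply_self_le (A : H →L[ℂ] H) (x : H) : ‖⟪A x, x⟫_ℂ‖ ≤ ‖A‖ * ‖x‖ ^ 2 :=
  calc ‖⟪A x, x⟫_ℂ‖ ≤ ‖A x‖ * ‖x‖ := norm_inner_le_norm _ _
    _ ≤ ‖A‖ * ‖x‖ * ‖x‖ := by gcongr; exact A.le_opNorm x
    _ = ‖A‖ * ‖x‖ ^ 2 := by ring

lemma numRadius_nonneg (A : H →L[ℂ] H) : 0 ≤ numRadius A :=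
  Real.sSup_nonneg fun _ ⟨_, _, hr⟩ ↦ hr ▸ norm_nonneg _

lemma norm_inner_le_numRadius (A : H →L[ℂ] H) {x : H} (hx : ‖x‖ = 1) :
    ‖⟪A x, x⟫_ℂ‖ ≤ numRadius A := by
  refine le_csSup ⟨‖A‖, ?_⟩ ⟨x, hx, rfl⟩
  rintro _ ⟨y, hy, rfl⟩
  simpa [hy] using norm_inner_apply_self_le A y

lemma numRadius_le_of_forall (A : H →L[ℂ] H) {c : ℝ} (hc : 0 ≤ c)
    (h : ∀ x : H, ‖x‖ = 1 → ‖⟪A x, x⟫_ℂ‖ ≤ c) : numRadius A ≤ c :=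
  Real.sSup_le (fun _ ⟨x, hx, hr⟩ ↦ hr ▸ h x hx) hc

lemma norm_inner_le_numRadius_mul_sq (A : H →L[ℂ] H) (x : H) :
    ‖⟪A x, x⟫_ℂ‖ ≤ numRadius A * ‖x‖ ^ 2 := by
  rcases eq_or_ne x 0 with rfl | hx
  · simp
  have hu := norm_inner_le_numRadius A (norm_smul_inv_norm (𝕜 := ℂ) hx)
  simp only [map_smul, inner_smul_left, inner_smul_right, norm_mul, RCLike.norm_conj, norm_inv,
    RCLike.norm_ofReal, abs_norm] at hu
  calc ‖⟪A x, x⟫_ℂ‖ = ‖x‖ ^ 2 * (‖x‖⁻¹ * (‖x‖⁻¹ * ‖⟪A x, x⟫_ℂ‖)) := by field_simp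
    _ ≤ numRadius A * ‖x‖ ^ 2 := by rw [mul_comm]; gcongr

lemma norm_inner_mul_inner_le {a b e : H} (he : ‖e‖ = 1) :
    2 * ‖⟪a, e⟫_ℂ * ⟪e, b⟫_ℂ‖ ≤ ‖a‖ * ‖b‖ + ‖⟪a, b⟫_ℂ‖ := by
  have hrefl : ⟪a, (ℂ ∙ e).reflection b⟫_ℂ = 2 * (⟪a, e⟫_ℂ * ⟪e, b⟫_ℂ) - ⟪a, b⟫_ℂ := by
    rw [Submodule.reflection_apply, Submodule.starProjection_unit_singleton ℂ he, two_smul,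
      inner_sub_right, inner_add_right, inner_smul_right]
    ring
  calc 2 * ‖⟪a, e⟫_ℂ * ⟪e, b⟫_ℂ‖ = ‖⟪a, (ℂ ∙ e).reflection b⟫_ℂ + ⟪a, b⟫_ℂ‖ := by
        rw [hrefl, sub_add_cancel, norm_mul 2, Complex.norm_two]
    _ ≤ ‖⟪a, (ℂ ∙ e).reflection b⟫_ℂ‖ + ‖⟪a, b⟫_ℂ‖ := norm_add_le _ _
    _ ≤ ‖a‖ * ‖b‖ + ‖⟪a, b⟫_ℂ‖ := by
        grw [norm_inner_le_norm, LinearIsometryEquiv.norm_map]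

variable [CompleteSpace H]

lemma norm_add_adjoint_le_two_mul_numRadius (T : H →L[ℂ] H) :
    ‖T + adjoint T‖ ≤ 2 * numRadius T := by
  have hsymm : (T + adjoint T).IsSymmetric := by
    simpa [star_eq_adjoint] using (IsSelfAdjoint.add_star_self T).isSymmetric
  rw [norm_eq_iSup_rayleighQuotient _ hsymm]
  refine ciSup_le fun x ↦ ?_
  rw [rayleighQuotient, reApplyInnerSelf_apply, abs_div, abs_sq]
  refine div_le_of_le_mul₀ (by positivity) (by positivity [numRadius_nonneg T]) ?_
  have hre : RCLike.re ⟪(T + adjoint T) x, x⟫_ℂ = 2 * RCLike.re ⟪T x, x⟫_ℂ := by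
    rw [add_apply, inner_add_left, adjoint_inner_left, ← inner_conj_symm x, map_add,
      RCLike.conj_re]
    ring
  calc |RCLike.re ⟪(T + adjoint T) x, x⟫_ℂ| = 2 * |RCLike.re ⟪T x, x⟫_ℂ| := by
        rw [hre, abs_mul, abs_two]
    _ ≤ 2 * (numRadius T * ‖x‖ ^ 2) := by
        grw [RCLike.abs_re_le_norm, norm_inner_le_numRadius_mul_sq]
    _ = 2 * numRadius T * ‖x‖ ^ 2 := by ring

lemma sq_norm_inner_le (A : H →L[ℂ] H) {x : H} (hx : ‖x‖ = 1) :
    ‖⟪A x, x⟫_ℂ‖ ^ 2 ≤ (1/2 : ℝ) * ‖⟪(A ^ 2) x, x⟫_ℂ‖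
      + (1/4 : ℝ) * ‖adjoint A * A + A * adjoint A‖ := by
  have hbuzano := norm_inner_mul_inner_le (a := A x) (b := adjoint A x) hx
  rw [adjoint_inner_right, adjoint_inner_right, ← sq, norm_pow] at hbuzano
  have hsum : ‖A x‖ ^ 2 + ‖adjoint A x‖ ^ 2 ≤ ‖adjoint A * A + A * adjoint A‖ := by
    calc ‖A x‖ ^ 2 + ‖adjoint A x‖ ^ 2
        = RCLike.re ⟪(adjoint A * A + A * adjoint A) x, x⟫_ℂ := by
          rw [apply_norm_sq_eq_inner_adjoint_left, apply_norm_sq_eq_inner_adjoint_left,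
            adjoint_adjoint, add_apply, inner_add_left, map_add]
          rfl
      _ ≤ ‖adjoint A * A + A * adjoint A‖ := by
          grw [RCLike.re_le_norm, norm_inner_apply_self_le, hx, one_pow, mul_one]
  have hamgm := two_mul_le_add_sq ‖A x‖ ‖adjoint A x‖
  rw [sq A, mul_apply_eq_comp]
  linarith

lemma numRadius_sq_le (A : H →L[ℂ] H) :
    numRadius A ^ 2 ≤ (1/2 : ℝ) * numRadius (A ^ 2)
      + (1/4 : ℝ) * ‖adjoint A * A + A * adjoint A‖ := by
  have hc : 0 ≤ (1/2 : ℝ) * numRadius (A ^ 2) + (1/4 : ℝ) * ‖adjoint A * A + A * adjoint A‖ := by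
    positivity [numRadius_nonneg (A ^ 2)]
  rw [← Real.le_sqrt (numRadius_nonneg A) hc]
  refine numRadius_le_of_forall A (Real.sqrt_nonneg _) fun x hx ↦ ?_
  rw [Real.le_sqrt (norm_nonneg _) hc]
  grw [sq_norm_inner_le A hx, norm_inner_le_numRadius (A ^ 2) hx]

end NumRadius

lemma add_star_mul_self_sq {R : Type*} [Ring R] [StarRing R] (a : R) :
    (star a * a + a * star a) ^ 2 = (star a * a) ^ 2 + (a * star a) ^ 2
      + (star a * a ^ 2 * star a + star (star a * a ^ 2 * star a)) := by
  simp only [star_mul, star_star, star_pow]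
  noncomm_ring

lemma norm_add_star_mul_self_sq_le {R : Type*} [NormedRing R] [StarRing R] [CStarRing R] (a : R) :
    ‖star a * a + a * star a‖ ^ 2 ≤ ‖(star a * a) ^ 2 + (a * star a) ^ 2‖
      + ‖star a * a ^ 2 * star a + star (star a * a ^ 2 * star a)‖ := by
  rw [← (IsSelfAdjoint.star_mul_self a |>.add (.mul_star_self a)).norm_mul_self, ← sq,
    add_star_mul_self_sq]
  exact norm_add_le _ _

theorem stmt13_general {H : Type*} [NormedAddCommGroup H] [InnerProductSpace ℂ H]
    [CompleteSpace H] (A : H →L[ℂ] H) :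
    numRadius A ^ 4 ≤ (1/4 : ℝ) * (numRadius (A ^ 2) ^ 2 +
      (1/4 : ℝ) * ‖(adjoint A * A) ^ 2 + (A * adjoint A) ^ 2‖ +
      (1/2 : ℝ) * numRadius (adjoint A * A ^ 2 * adjoint A) +
      numRadius (A ^ 2) * ‖adjoint A * A + A * adjoint A‖) := by
  set T := adjoint A * A ^ 2 * adjoint A
  set s := ‖adjoint A * A + A * adjoint A‖
  have hs : s ^ 2 ≤ ‖(adjoint A * A) ^ 2 + (A * adjoint A) ^ 2‖ + 2 * numRadius T := by
    have h := norm_add_star_mul_self_sq_le A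
    simp only [star_eq_adjoint] at h
    grw [h, ← norm_add_adjoint_le_two_mul_numRadius]
  calc numRadius A ^ 4 = (numRadius A ^ 2) ^ 2 := by ring
    _ ≤ ((1/2 : ℝ) * numRadius (A ^ 2) + (1/4 : ℝ) * s) ^ 2 := by
        gcongr
        exact numRadius_sq_le A
    _ = (1/4 : ℝ) * (numRadius (A ^ 2) ^ 2 + (1/4 : ℝ) * s ^ 2 + numRadius (A ^ 2) * s) := by
        ring
    _ ≤ (1/4 : ℝ) * (numRadius (A ^ 2) ^ 2 +
          (1/4 : ℝ) * (‖(adjoint A * A) ^ 2 + (A * adjoint A) ^ 2‖ + 2 * numRadius T) +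
          numRadius (A ^ 2) * s) := by
        gcongr
    _ = _ := by ring

theorem stmt13 {H : Type*} [NormedAddCommGroup H] [InnerProductSpace ℂ H]
    [CompleteSpace H] [Nontrivial H] (A : H →L[ℂ] H) :
    numRadius A ^ 4 ≤ (1/4 : ℝ) * (numRadius (A ^ 2) ^ 2 +
      (1/4 : ℝ) * ‖(adjoint A * A) ^ 2 + (A * adjoint A) ^ 2‖ +
      (1/2 : ℝ) * numRadius (adjoint A * A ^ 2 * adjoint A) +
      numRadius (A ^ 2) * ‖adjoint A * A + A * adjoint A‖) :=
  stmt13_general A
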